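/- arXiv:1709.07031 — 2 statements merged into one kernel-verified Lean document; each statement's English description precedes it below -/
import Mathlib

section
/- Let γ : [0,1] → (0,∞) satisfy |γ_s − γ_t| ≤ C₂ |s − t|^{α₂} and let c : [0,1] → (0,∞) satisfy |c_s − c_t| ≤ C |s − t|^{α} for constants C₂, C, α₂, α₁ > 0 with α := min(α₁/2, α₂). Let (k_n) be an intermediate sequence with k_n = o(n^{1−ε}) for some ε > 0, set a_t(x) := γ_t c_t x^{γ_t}, and suppose the functions U_t satisfy: for every κ > 0 there is x_κ such that sup_{t∈[0,1]} |U_t(x) − c_t x^{γ_t}| ≤ x^{−κ} for all x ≥ x_κ. If δ_n = o(min(k_n^{−1/(2α₂)} (log n)^{−1/α₂}, k_n^{−1/α₁})), then with λ_n := k_n^{−1/2}: sup_{|s−t|≤δ_n} |γ_s − γ_t| = o(λ_n), sup_{|s−t|≤δ_n} |a_s(n/k_n)/a_t(n/k_n) − 1| = o(λ_n), and sup_{|s−t|≤δ_n} |(U_s(n/k_n) − U_t(n/k_n))/a_t(n/k_n)| = o(λ_n). -/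
/-!
Within distance `δₙ`, the Hölder bounds give `|γ_s - γ_u| log(n/kₙ) ≤ C₂ δₙ^{α₂} log n` and
`|c_s - c_u| ≤ C δₙ^α`, and the mesh condition makes both `o(kₙ^{-1/2})`; taking `κ = 1/ε` in the
quantile expansion makes its error `(n/kₙ)^{-κ} ≤ n⁻¹` negligible as well. All three quantities are
then bounded, uniformly in the pair, by a constant times the sum `L` of these errors: the ratio
`a_s/a_u` factors as `(γ_s/γ_u) (c_s/c_u) x^{γ_s - γ_u}`, each factor lies within `O(L)` of `1`
(`eʸ - 1 = O(y)` for the last), and the constants only depend on positive lower bounds of `γ` and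
`c` on the compact interval `[0, 1]`.
-/

open Filter Topology Set

open Real Asymptotics

theorem continuousOn_of_abs_sub_le_mul_rpow {f : ℝ → ℝ} {s : Set ℝ} {K β : ℝ} (hβ : 0 < β)
    (h : ∀ x ∈ s, ∀ y ∈ s, |f x - f y| ≤ K * |x - y| ^ β) : ContinuousOn f s := by
  intro x hx
  rw [ContinuousWithinAt, tendsto_iff_norm_sub_tendsto_zero]
  have hmod : Tendsto (fun y => K * |y - x| ^ β) (𝓝 x) (𝓝 (K * |x - x| ^ β)) :=
    ((continuous_abs.comp (continuous_sub_right x)).rpow_const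
      fun _ => Or.inr hβ.le).const_mul K |>.tendsto x
  rw [sub_self, abs_zero, zero_rpow hβ.ne', mul_zero] at hmod
  exact squeeze_zero' (Eventually.of_forall fun _ => norm_nonneg _)
    (eventually_nhdsWithin_of_forall fun y hy => h y hy x hx) (hmod.mono_left nhdsWithin_le_nhds)

theorem IsCompact.exists_pos_forall_le {α : Type*} [TopologicalSpace α] {f : α → ℝ} {s : Set α}
    (hs : IsCompact s) (hf : ContinuousOn f s) (hpos : ∀ x ∈ s, 0 < f x) :
    ∃ m > 0, ∀ x ∈ s, m ≤ f x := by
  rcases s.eq_empty_or_nonempty with rfl | hne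
  · exact ⟨1, one_pos, by simp⟩
  obtain ⟨x, hx, hmin⟩ := hs.exists_isMinOn hne hf
  exact ⟨f x, hpos x hx, fun y hy => hmin hy⟩

theorem abs_rpow_sub_one_le {x y : ℝ} (hx : 0 < x) (h : |y * log x| ≤ 1) :
    |x ^ y - 1| ≤ 2 * |y * log x| := by
  rw [rpow_def_of_pos hx, mul_comm (log x)]
  exact abs_exp_sub_one_le h

theorem abs_div_sub_one_le {p q m L : ℝ} (hm : 0 < m) (hq : m ≤ q) (h : |p - q| ≤ L) :
    |p / q - 1| ≤ m⁻¹ * L := by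
  have hq0 : 0 < q := hm.trans_le hq
  rw [div_sub_one hq0.ne', abs_div, abs_of_pos hq0, inv_mul_eq_div]
  exact div_le_div₀ ((abs_nonneg _).trans h) h hm hq

theorem abs_mul_sub_one_le {p q A B L : ℝ} (hL0 : 0 ≤ L) (hL1 : L ≤ 1)
    (hp : |p - 1| ≤ A * L) (hq : |q - 1| ≤ B * L) : |p * q - 1| ≤ (A + B + A * B) * L := by
  have hAL : 0 ≤ A * L := (abs_nonneg _).trans hp
  have hprod : |(p - 1) * (q - 1)| ≤ A * B * L := by
    rcases hL0.eq_or_lt with rfl | hL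
    · simp only [mul_zero, abs_nonpos_iff] at hp ⊢
      simp [hp]
    have hB : 0 ≤ B := (mul_nonneg_iff_of_pos_right hL).1 ((abs_nonneg _).trans hq)
    rw [abs_mul]
    calc |p - 1| * |q - 1| ≤ A * L * (B * L) := mul_le_mul hp hq (abs_nonneg _) hAL
      _ ≤ A * L * B := mul_le_mul_of_nonneg_left (mul_le_of_le_one_right hB hL1) hAL
      _ = A * B * L := by ring
  calc |p * q - 1| = |(p - 1) * (q - 1) + (p - 1) + (q - 1)| := by ring_nf
    _ ≤ |(p - 1) * (q - 1)| + |p - 1| + |q - 1| := abs_add_three _ _ _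
    _ ≤ (A + B + A * B) * L := by linarith

theorem abs_div_mul_rpow_sub_one_le {x cs cu gs gu mc L : ℝ} (hx : 0 < x) (hmc : 0 < mc)
    (hcu : mc ≤ cu) (hL0 : 0 ≤ L) (hL1 : L ≤ 1) (hc : |cs - cu| ≤ L)
    (hg : |(gs - gu) * log x| ≤ L) :
    |cs / cu * x ^ (gs - gu) - 1| ≤ (mc⁻¹ + 2 + mc⁻¹ * 2) * L :=
  abs_mul_sub_one_le hL0 hL1 (abs_div_sub_one_le hmc hcu hc)
    ((abs_rpow_sub_one_le hx (hg.trans hL1)).trans (by linarith))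

theorem abs_scale_ratio_sub_one_le {x gs gu cs cu mγ B L : ℝ} (hx : 0 < x) (hmγ : 0 < mγ)
    (hgu : mγ ≤ gu) (hcu : cu ≠ 0) (hL0 : 0 ≤ L) (hL1 : L ≤ 1) (hg : |gs - gu| ≤ L)
    (hR : |cs / cu * x ^ (gs - gu) - 1| ≤ B * L) :
    |gs * cs * x ^ gs / (gu * cu * x ^ gu) - 1| ≤ (mγ⁻¹ + B + mγ⁻¹ * B) * L := by
  have hscale : gs * cs * x ^ gs / (gu * cu * x ^ gu) = gs / gu * (cs / cu * x ^ (gs - gu)) := by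
    have := (hmγ.trans_le hgu).ne'
    rw [rpow_sub hx]
    field_simp
  rw [hscale]
  exact abs_mul_sub_one_le hL0 hL1 (abs_div_sub_one_le hmγ hgu hg) hR

theorem abs_sub_div_scale_le {x gs gu cs cu Us Uu mγ mc B L : ℝ} (hx : 1 ≤ x) (hmγ : 0 < mγ)
    (hgu : mγ ≤ gu) (hmc : 0 < mc) (hcu : mc ≤ cu) (hUs : |Us - cs * x ^ gs| ≤ L)
    (hUu : |Uu - cu * x ^ gu| ≤ L) (hR : |cs / cu * x ^ (gs - gu) - 1| ≤ B * L) :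
    |(Us - Uu) / (gu * cu * x ^ gu)| ≤ (2 * (mγ * mc)⁻¹ + mγ⁻¹ * B) * L := by
  have hx0 : 0 < x := one_pos.trans_le hx
  have hgu0 : 0 < gu := hmγ.trans_le hgu
  have hcu0 : 0 < cu := hmc.trans_le hcu
  have hscale : mγ * mc ≤ gu * cu * x ^ gu :=
    calc mγ * mc ≤ gu * cu := mul_le_mul hgu hcu hmc.le hgu0.le
      _ ≤ gu * cu * x ^ gu := le_mul_of_one_le_right (by positivity) (one_le_rpow hx hgu0.le)
  have hsplit : (Us - Uu) / (gu * cu * x ^ gu) =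
      ((Us - cs * x ^ gs) - (Uu - cu * x ^ gu)) / (gu * cu * x ^ gu) +
        (cs / cu * x ^ (gs - gu) - 1) / gu := by
    rw [rpow_sub hx0]
    field_simp
    ring
  have hBL : 0 ≤ B * L := (abs_nonneg _).trans hR
  rw [hsplit]
  calc _ ≤ |(Us - cs * x ^ gs) - (Uu - cu * x ^ gu)| / (gu * cu * x ^ gu) +
        |cs / cu * x ^ (gs - gu) - 1| / gu := by
        refine (abs_add_le _ _).trans_eq ?_
        rw [abs_div, abs_div, abs_of_pos hgu0, abs_of_pos (by positivity : 0 < gu * cu * x ^ gu)]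
    _ ≤ (L + L) / (mγ * mc) + B * L / mγ := by
        gcongr
        · linarith [(abs_nonneg (Us - cs * x ^ gs)).trans hUs]
        · exact (abs_sub _ _).trans (add_le_add hUs hUu)
    _ = (2 * (mγ * mc)⁻¹ + mγ⁻¹ * B) * L := by field_simp; ring

/-- The mesh condition on `δₙ` reads `δₙ = o(meshScale α₁ α₂ kₙ (log n))`. -/
noncomputable def meshScale (α₁ α₂ x ℓ : ℝ) : ℝ :=
  min (x ^ (-(1 / (2 * α₂))) * ℓ ^ (-(1 / α₂))) (x ^ (-(1 / α₁)))

theorem meshScale_pos {α₁ α₂ x ℓ : ℝ} (hx : 0 < x) (hℓ : 0 < ℓ) : 0 < meshScale α₁ α₂ x ℓ :=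
  lt_min (by positivity) (by positivity)

theorem meshScale_rpow_mul_le {α₁ α₂ x ℓ : ℝ} (hα₂ : 0 < α₂) (hx : 0 < x) (hℓ : 0 < ℓ) :
    meshScale α₁ α₂ x ℓ ^ α₂ * ℓ ≤ x ^ (-(1 / 2 : ℝ)) := by
  have hexp₁ : -(1 / (2 * α₂)) * α₂ = -(1 / 2 : ℝ) := by field_simp
  have hexp₂ : -(1 / α₂) * α₂ = -1 := by field_simp
  calc meshScale α₁ α₂ x ℓ ^ α₂ * ℓ ≤ (x ^ (-(1 / (2 * α₂))) * ℓ ^ (-(1 / α₂))) ^ α₂ * ℓ := by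
        gcongr
        · exact (meshScale_pos hx hℓ).le
        · exact min_le_left _ _
    _ = x ^ (-(1 / 2 : ℝ)) := by
        rw [mul_rpow (by positivity) (by positivity), ← rpow_mul hx.le, ← rpow_mul hℓ.le, hexp₁,
          hexp₂, rpow_neg_one, mul_assoc, inv_mul_cancel₀ hℓ.ne', mul_one]

theorem meshScale_rpow_min_le {α₁ α₂ x ℓ : ℝ} (hα₁ : 0 < α₁) (hα₂ : 0 < α₂) (hx : 0 < x)
    (hℓ : 1 ≤ ℓ) : meshScale α₁ α₂ x ℓ ^ min (α₁ / 2) α₂ ≤ x ^ (-(1 / 2 : ℝ)) := by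
  have hm := (meshScale_pos (α₁ := α₁) (α₂ := α₂) hx (one_pos.trans_le hℓ)).le
  rcases min_choice (α₁ / 2) α₂ with h | h <;> rw [h]
  · calc meshScale α₁ α₂ x ℓ ^ (α₁ / 2) ≤ (x ^ (-(1 / α₁))) ^ (α₁ / 2) := by
          gcongr
          exact min_le_right _ _
      _ = x ^ (-(1 / 2 : ℝ)) := by
          rw [← rpow_mul hx.le]
          congr 1
          field_simp
  · exact (le_mul_of_one_le_right (by positivity) hℓ).trans
      (meshScale_rpow_mul_le hα₂ hx (one_pos.trans_le hℓ))

theorem Asymptotics.IsLittleO.rpow_mul_of_le {α : Type*} {l : Filter α} {δ m w g : α → ℝ} {β : ℝ}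
    (hδ : δ =o[l] m) (hβ : 0 < β) (hm : 0 ≤ᶠ[l] m) (hw : 0 ≤ᶠ[l] w)
    (hle : ∀ᶠ n in l, m n ^ β * w n ≤ g n) : (fun n => δ n ^ β * w n) =o[l] g := by
  refine ((hδ.rpow hβ hm).mul_isBigO (isBigO_refl w l)).trans_isBigO (IsBigO.of_bound 1 ?_)
  filter_upwards [hm, hw, hle] with n hmn hwn hn
  rw [one_mul, norm_of_nonneg (mul_nonneg (rpow_nonneg hmn _) hwn)]
  exact hn.trans (le_abs_self _)

theorem Asymptotics.IsLittleO.eventually_mul_le {α : Type*} {l : Filter α} {f g : α → ℝ}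
    (hf : f =o[l] g) (hg : ∀ᶠ n in l, 0 < g n) (K : ℝ) {η : ℝ} (hη : 0 < η) :
    ∀ᶠ n in l, K * f n ≤ η * g n := by
  filter_upwards [(hf.const_mul_left K).bound hη, hg] with n hn hgn
  rw [norm_eq_abs, norm_eq_abs, abs_of_pos hgn] at hn
  exact (le_abs_self _).trans hn

theorem rpow_le_div_of_le_rpow {x y ε : ℝ} (hx : 0 < x) (hy : 0 < y) (h : y ≤ x ^ (1 - ε)) :
    x ^ ε ≤ x / y := by
  rw [le_div_iff₀ hy]
  calc x ^ ε * y ≤ x ^ ε * x ^ (1 - ε) := by gcongr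
    _ = x := by rw [← rpow_add hx, add_sub_cancel, rpow_one]

section IntermediateSequence

variable {k : ℕ → ℕ} {ε : ℝ}

theorem eventually_rpow_le_div (hk : ∀ᶠ n in atTop, 1 ≤ k n ∧ k n ≤ n)
    (hkε : ∀ᶠ n in atTop, (k n : ℝ) ≤ (n : ℝ) ^ (1 - ε)) :
    ∀ᶠ n : ℕ in atTop, (n : ℝ) ^ ε ≤ n / k n := by
  filter_upwards [hk, hkε] with n ⟨hk1, hkn⟩ hkεn
  exact rpow_le_div_of_le_rpow (by exact_mod_cast hk1.trans hkn) (by exact_mod_cast hk1) hkεn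

theorem tendsto_natCast_div_atTop (hε : 0 < ε) (hk : ∀ᶠ n in atTop, 1 ≤ k n ∧ k n ≤ n)
    (hkε : ∀ᶠ n in atTop, (k n : ℝ) ≤ (n : ℝ) ^ (1 - ε)) :
    Tendsto (fun n : ℕ => (n : ℝ) / k n) atTop atTop :=
  tendsto_atTop_mono' atTop (eventually_rpow_le_div hk hkε)
    ((tendsto_rpow_atTop hε).comp tendsto_natCast_atTop_atTop)

theorem isLittleO_div_rpow_neg (hε : 0 < ε) (hk : ∀ᶠ n in atTop, 1 ≤ k n ∧ k n ≤ n)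
    (hkε : ∀ᶠ n in atTop, (k n : ℝ) ≤ (n : ℝ) ^ (1 - ε)) :
    (fun n : ℕ => ((n : ℝ) / k n) ^ (-(1 / ε))) =o[atTop] fun n => (k n : ℝ) ^ (-(1 / 2 : ℝ)) := by
  have hsmall : (fun n : ℕ => (n : ℝ) ^ (-(1 / 2 : ℝ))) =o[atTop] fun _ => (1 : ℝ) :=
    (isLittleO_one_iff ℝ).2
      ((tendsto_rpow_neg_atTop (by norm_num)).comp tendsto_natCast_atTop_atTop)
  refine (IsBigO.of_bound 1 ?_).trans_isLittleO (by
    simpa only [one_mul] using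
      hsmall.mul_isBigO (isBigO_refl (fun n => (k n : ℝ) ^ (-(1 / 2 : ℝ))) atTop))
  filter_upwards [hk, eventually_rpow_le_div hk hkε] with n ⟨hk1, hkn⟩ hX
  have hk0 : (0 : ℝ) < k n := by exact_mod_cast hk1
  have hn0 : (0 : ℝ) < n := by exact_mod_cast hk1.trans hkn
  rw [one_mul, norm_of_nonneg (by positivity), norm_of_nonneg (by positivity)]
  calc ((n : ℝ) / k n) ^ (-(1 / ε)) ≤ ((n : ℝ) ^ ε) ^ (-(1 / ε)) :=
        rpow_le_rpow_of_nonpos (by positivity) hX (by simp only [neg_nonpos]; positivity)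
    _ = (n : ℝ) ^ (-(1 / 2 : ℝ)) * (n : ℝ) ^ (-(1 / 2 : ℝ)) := by
        rw [← rpow_mul hn0.le, ← rpow_add hn0]
        congr 1
        field_simp
        norm_num
    _ ≤ (n : ℝ) ^ (-(1 / 2 : ℝ)) * (k n : ℝ) ^ (-(1 / 2 : ℝ)) := by
        exact mul_le_mul_of_nonneg_left
          (rpow_le_rpow_of_nonpos hk0 (by exact_mod_cast hkn) (by norm_num)) (by positivity)

end IntermediateSequence

theorem isLittleO_modulus {k : ℕ → ℕ} {δ : ℕ → ℝ} {C₂ C α₁ α₂ ε : ℝ} (hα₁ : 0 < α₁)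
    (hα₂ : 0 < α₂) (hε : 0 < ε) (hk : ∀ᶠ n in atTop, 1 ≤ k n ∧ k n ≤ n)
    (hkε : ∀ᶠ n in atTop, (k n : ℝ) ≤ (n : ℝ) ^ (1 - ε))
    (hδ : Tendsto (fun n : ℕ => δ n / meshScale α₁ α₂ (k n) (log n)) atTop (𝓝 0)) :
    (fun n : ℕ => C₂ * (δ n ^ α₂ * log n) + C * δ n ^ min (α₁ / 2) α₂ +
      ((n : ℝ) / k n) ^ (-(1 / ε))) =o[atTop] fun n => (k n : ℝ) ^ (-(1 / 2 : ℝ)) := by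
  have hlog : ∀ᶠ n : ℕ in atTop, 1 ≤ log n :=
    (tendsto_log_atTop.comp tendsto_natCast_atTop_atTop).eventually_ge_atTop 1
  have hgood : ∀ᶠ n : ℕ in atTop, 0 < (k n : ℝ) ∧ 1 ≤ log n := by
    filter_upwards [hk, hlog] with n hkn hn
    exact ⟨by exact_mod_cast hkn.1, hn⟩
  have hm : ∀ᶠ n : ℕ in atTop, 0 < meshScale α₁ α₂ (k n) (log n) :=
    hgood.mono fun n hn => meshScale_pos hn.1 (one_pos.trans_le hn.2)
  have hδm : δ =o[atTop] fun n => meshScale α₁ α₂ (k n) (log n) :=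
    (isLittleO_iff_tendsto' (hm.mono fun n hn h => absurd h hn.ne')).2 hδ
  have hm0 : 0 ≤ᶠ[atTop] fun n => meshScale α₁ α₂ (k n) (log n) := hm.mono fun n hn => hn.le
  have hγpart : (fun n => δ n ^ α₂ * log n) =o[atTop] fun n => (k n : ℝ) ^ (-(1 / 2 : ℝ)) :=
    hδm.rpow_mul_of_le hα₂ hm0 (hlog.mono fun n hn => zero_le_one.trans hn)
      (hgood.mono fun n hn => meshScale_rpow_mul_le hα₂ hn.1 (one_pos.trans_le hn.2))
  have hcpart : (fun n => δ n ^ min (α₁ / 2) α₂) =o[atTop]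
      fun n => (k n : ℝ) ^ (-(1 / 2 : ℝ)) := by
    simpa only [Pi.one_apply, mul_one] using
      hδm.rpow_mul_of_le (w := 1) (lt_min (by positivity) hα₂) hm0
        (Eventually.of_forall fun _ => zero_le_one) (hgood.mono fun n hn => by
          simpa only [Pi.one_apply, mul_one] using meshScale_rpow_min_le hα₁ hα₂ hn.1 hn.2)
  exact ((hγpart.const_mul_left C₂).add (hcpart.const_mul_left C)).add
    (isLittleO_div_rpow_neg hε hk hkε)

theorem exists_smoothness_bounds_of_holder {γ c : ℝ → ℝ} {U : ℝ → ℝ → ℝ} {S : Set ℝ}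
    {C₂ C β₂ β : ℝ} (hS : IsCompact S) (hC₂ : 0 ≤ C₂) (hC : 0 ≤ C) (hβ₂ : 0 < β₂) (hβ : 0 < β)
    (hγpos : ∀ s ∈ S, 0 < γ s) (hcpos : ∀ s ∈ S, 0 < c s)
    (hγ : ∀ s ∈ S, ∀ u ∈ S, |γ s - γ u| ≤ C₂ * |s - u| ^ β₂)
    (hc : ∀ s ∈ S, ∀ u ∈ S, |c s - c u| ≤ C * |s - u| ^ β) :
    ∃ K, ∀ ⦃x ℓ d e L : ℝ⦄, exp 1 ≤ x → log x ≤ ℓ →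
      (∀ t ∈ S, |U t x - c t * x ^ γ t| ≤ e) → C₂ * (d ^ β₂ * ℓ) + C * d ^ β + e ≤ L → L ≤ 1 →
      ∀ s ∈ S, ∀ u ∈ S, |s - u| ≤ d →
        |γ s - γ u| ≤ K * L ∧
        |γ s * c s * x ^ γ s / (γ u * c u * x ^ γ u) - 1| ≤ K * L ∧
        |(U s x - U u x) / (γ u * c u * x ^ γ u)| ≤ K * L := by
  obtain ⟨mγ, hmγ, hγlow⟩ :=
    hS.exists_pos_forall_le (continuousOn_of_abs_sub_le_mul_rpow hβ₂ hγ) hγpos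
  obtain ⟨mc, hmc, hclow⟩ :=
    hS.exists_pos_forall_le (continuousOn_of_abs_sub_le_mul_rpow hβ hc) hcpos
  set B := mc⁻¹ + 2 + mc⁻¹ * 2
  refine ⟨max 1 (max (mγ⁻¹ + B + mγ⁻¹ * B) (2 * (mγ * mc)⁻¹ + mγ⁻¹ * B)),
    fun x ℓ d e L hx hxℓ hU hL hL1 s hs u hu hsu => ?_⟩
  have hx1 : 1 ≤ x := (one_le_exp zero_le_one).trans hx
  have hlog : 1 ≤ log x := (le_log_iff_exp_le (one_pos.trans_le hx1)).2 hx
  have hd : 0 ≤ d := (abs_nonneg _).trans hsu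
  have he : 0 ≤ e := (abs_nonneg _).trans (hU s hs)
  have hγℓ : 0 ≤ C₂ * (d ^ β₂ * ℓ) := by
    have := hlog.trans hxℓ
    positivity
  have hcd : 0 ≤ C * d ^ β := by positivity
  have hL0 : 0 ≤ L := by linarith
  have hγlog : |(γ s - γ u) * log x| ≤ L := by
    rw [abs_mul, abs_of_nonneg (zero_le_one.trans hlog)]
    calc |γ s - γ u| * log x ≤ C₂ * d ^ β₂ * ℓ :=
          mul_le_mul ((hγ s hs u hu).trans (by gcongr)) hxℓ (by positivity) (by positivity)
      _ ≤ L := by rw [mul_assoc]; linarith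
  have hγsu : |γ s - γ u| ≤ L := by
    refine le_trans ?_ hγlog
    rw [abs_mul]
    exact le_mul_of_one_le_right (abs_nonneg _) (hlog.trans (le_abs_self _))
  have hcsu : |c s - c u| ≤ L :=
    calc |c s - c u| ≤ C * d ^ β := (hc s hs u hu).trans (by gcongr)
      _ ≤ L := by linarith
  have hR := abs_div_mul_rpow_sub_one_le (one_pos.trans_le hx1) hmc (hclow u hu) hL0 hL1 hcsu hγlog
  refine ⟨hγsu.trans (le_mul_of_one_le_left hL0 (le_max_left _ _)),
    (abs_scale_ratio_sub_one_le (one_pos.trans_le hx1) hmγ (hγlow u hu)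
      (hmc.trans_le (hclow u hu)).ne' hL0 hL1 hγsu hR).trans ?_,
    (abs_sub_div_scale_le hx1 hmγ (hγlow u hu) hmc (hclow u hu) ((hU s hs).trans (by linarith))
      ((hU u hu).trans (by linarith)) hR).trans ?_⟩
  · exact mul_le_mul_of_nonneg_right (le_max_of_le_right (le_max_left _ _)) hL0
  · exact mul_le_mul_of_nonneg_right (le_max_of_le_right (le_max_right _ _)) hL0

theorem holder_model_smoothness_general
    (γ c : ℝ → ℝ)
    (C₂ C α₁ α₂ : ℝ) (hC₂ : 0 < C₂) (hC : 0 < C) (hα₁ : 0 < α₁) (hα₂ : 0 < α₂)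
    (hγpos : ∀ s ∈ Icc (0:ℝ) 1, 0 < γ s) (hcpos : ∀ s ∈ Icc (0:ℝ) 1, 0 < c s)
    -- Hölder conditions, with α = min(α₁/2, α₂)
    (hγhold : ∀ s ∈ Icc (0:ℝ) 1, ∀ u ∈ Icc (0:ℝ) 1, |γ s - γ u| ≤ C₂ * |s - u| ^ α₂)
    (hchold : ∀ s ∈ Icc (0:ℝ) 1, ∀ u ∈ Icc (0:ℝ) 1,
      |c s - c u| ≤ C * |s - u| ^ min (α₁ / 2) α₂)
    -- intermediate sequence with kₙ = o(n^{1-ε})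
    (k : ℕ → ℕ) (hk : ∀ n, 1 ≤ n → 1 ≤ k n ∧ k n ≤ n)
    (ε : ℝ) (hε : 0 < ε)
    (hksmall : Tendsto (fun n : ℕ => (k n : ℝ) / (n : ℝ) ^ (1 - ε)) atTop (𝓝 0))
    -- quantile expansion: for every κ > 0, U_t(x) = c_t x^{γ_t} + O(x^{-κ}) uniformly
    (U : ℝ → ℝ → ℝ)
    (hU : ∀ κ : ℝ, 0 < κ → ∃ x₀ : ℝ, ∀ x ≥ x₀,
      ∀ s ∈ Icc (0:ℝ) 1, |U s x - c s * x ^ γ s| ≤ x ^ (-κ))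
    -- the mesh condition on δₙ
    (δ : ℕ → ℝ)
    (hδsmall : Tendsto (fun n : ℕ => δ n /
      min ((k n : ℝ) ^ (-(1 / (2 * α₂))) * (Real.log n) ^ (-(1 / α₂)))
          ((k n : ℝ) ^ (-(1 / α₁)))) atTop (𝓝 0))
    -- λₙ = kₙ^{-1/2} and the scale function a_t(x) = γ_t c_t x^{γ_t}
    (lam : ℕ → ℝ) (hlam : ∀ n, lam n = (k n : ℝ) ^ (-(1/2 : ℝ)))
    (a : ℝ → ℝ → ℝ) (ha : ∀ s x, a s x = γ s * c s * x ^ γ s) :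
    -- (2.11): sup_{|s-u|≤δₙ} |γ_s - γ_u| = o(λₙ)
    (∀ η > 0, ∀ᶠ n : ℕ in atTop, ∀ s ∈ Icc (0:ℝ) 1, ∀ u ∈ Icc (0:ℝ) 1,
      |s - u| ≤ δ n → |γ s - γ u| ≤ η * lam n) ∧
    -- (2.12): sup_{|s-u|≤δₙ} |a_s(n/kₙ)/a_u(n/kₙ) - 1| = o(λₙ)
    (∀ η > 0, ∀ᶠ n : ℕ in atTop, ∀ s ∈ Icc (0:ℝ) 1, ∀ u ∈ Icc (0:ℝ) 1,
      |s - u| ≤ δ n →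
        |a s ((n : ℝ) / (k n : ℝ)) / a u ((n : ℝ) / (k n : ℝ)) - 1| ≤ η * lam n) ∧
    -- (2.13): sup_{|s-u|≤δₙ} |(U_s(n/kₙ) - U_u(n/kₙ))/a_u(n/kₙ)| = o(λₙ)
    (∀ η > 0, ∀ᶠ n : ℕ in atTop, ∀ s ∈ Icc (0:ℝ) 1, ∀ u ∈ Icc (0:ℝ) 1,
      |s - u| ≤ δ n →
        |(U s ((n : ℝ) / (k n : ℝ)) - U u ((n : ℝ) / (k n : ℝ)))
          / a u ((n : ℝ) / (k n : ℝ))| ≤ η * lam n) := by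
  obtain rfl : lam = fun n => (k n : ℝ) ^ (-(1 / 2 : ℝ)) := funext hlam
  obtain ⟨K, hK⟩ := exists_smoothness_bounds_of_holder (U := U) isCompact_Icc hC₂.le hC.le hα₂
    (lt_min (by positivity) hα₂) hγpos hcpos hγhold hchold
  obtain ⟨x₀, hx₀⟩ := hU (1 / ε) (by positivity)
  have hk' : ∀ᶠ n : ℕ in atTop, 1 ≤ k n ∧ k n ≤ n := eventually_atTop.2 ⟨1, hk⟩
  have hkε : ∀ᶠ n : ℕ in atTop, (k n : ℝ) ≤ (n : ℝ) ^ (1 - ε) := by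
    filter_upwards [hksmall.eventually (eventually_le_nhds one_pos), eventually_gt_atTop 0]
      with n h hn
    rwa [div_le_one (by positivity)] at h
  have hLo := isLittleO_modulus (C₂ := C₂) (C := C) hα₁ hα₂ hε hk' hkε hδsmall
  have hlam : ∀ᶠ n : ℕ in atTop, 0 < (k n : ℝ) ^ (-(1 / 2 : ℝ)) :=
    hk'.mono fun n hn => rpow_pos_of_pos (by exact_mod_cast hn.1) _
  have hX := tendsto_natCast_div_atTop hε hk' hkε
  have key : ∀ η > 0, ∀ᶠ n : ℕ in atTop, ∀ s ∈ Icc (0:ℝ) 1, ∀ u ∈ Icc (0:ℝ) 1, |s - u| ≤ δ n →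
      |γ s - γ u| ≤ η * (k n : ℝ) ^ (-(1 / 2 : ℝ)) ∧
      |a s (n / k n) / a u (n / k n) - 1| ≤ η * (k n : ℝ) ^ (-(1 / 2 : ℝ)) ∧
      |(U s (n / k n) - U u (n / k n)) / a u (n / k n)| ≤ η * (k n : ℝ) ^ (-(1 / 2 : ℝ)) := by
    intro η hη
    filter_upwards [hX.eventually_ge_atTop (exp 1), hX.eventually_ge_atTop x₀, hk',
      hLo.eventually_mul_le hlam 1 one_pos, hLo.eventually_mul_le hlam K hη]
      with n hXe hXx₀ hkn hL1 hLη s hs u hu hsu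
    have hk1 : (1 : ℝ) ≤ k n := by exact_mod_cast hkn.1
    have hlam1 : (k n : ℝ) ^ (-(1 / 2 : ℝ)) ≤ 1 := rpow_le_one_of_one_le_of_nonpos hk1 (by norm_num)
    rw [ha, ha]
    have hlogX : log (n / k n) ≤ log n :=
      log_le_log ((exp_pos 1).trans_le hXe) (div_le_self (Nat.cast_nonneg _) hk1)
    obtain ⟨h₁, h₂, h₃⟩ := hK hXe hlogX (hx₀ _ hXx₀) le_rfl (by linarith) s hs u hu hsu
    exact ⟨h₁.trans hLη, h₂.trans hLη, h₃.trans hLη⟩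
  exact ⟨fun η hη => (key η hη).mono fun n h s hs u hu hsu => (h s hs u hu hsu).1,
    fun η hη => (key η hη).mono fun n h s hs u hu hsu => (h s hs u hu hsu).2.1,
    fun η hη => (key η hη).mono fun n h s hs u hu hsu => (h s hs u hu hsu).2.2⟩

/-- Example 2: under Hölder continuity of γ and c, the quantile
expansion U_t(x) ≈ c_t x^{γ_t}, and the mesh condition
δₙ = o(min(kₙ^{-1/(2α₂)} (log n)^{-1/α₂}, kₙ^{-1/α₁})), the smoothness conditions of
Theorem 1 hold with λₙ = kₙ^{-1/2}. -/
theorem holder_model_smoothness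
    (γ c : ℝ → ℝ)
    (C₂ C α₁ α₂ : ℝ) (hC₂ : 0 < C₂) (hC : 0 < C) (hα₁ : 0 < α₁) (hα₂ : 0 < α₂)
    (hγpos : ∀ s ∈ Icc (0:ℝ) 1, 0 < γ s) (hcpos : ∀ s ∈ Icc (0:ℝ) 1, 0 < c s)
    -- Hölder conditions, with α = min(α₁/2, α₂)
    (hγhold : ∀ s ∈ Icc (0:ℝ) 1, ∀ u ∈ Icc (0:ℝ) 1, |γ s - γ u| ≤ C₂ * |s - u| ^ α₂)
    (hchold : ∀ s ∈ Icc (0:ℝ) 1, ∀ u ∈ Icc (0:ℝ) 1,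
      |c s - c u| ≤ C * |s - u| ^ min (α₁ / 2) α₂)
    -- intermediate sequence with kₙ = o(n^{1-ε})
    (k : ℕ → ℕ) (hk : ∀ n, 1 ≤ n → 1 ≤ k n ∧ k n ≤ n)
    (hkinfty : Tendsto (fun n : ℕ => (k n : ℝ)) atTop atTop)
    (hkn0 : Tendsto (fun n : ℕ => (k n : ℝ) / n) atTop (𝓝 0))
    (ε : ℝ) (hε : 0 < ε)
    (hksmall : Tendsto (fun n : ℕ => (k n : ℝ) / (n : ℝ) ^ (1 - ε)) atTop (𝓝 0))
    -- quantile expansion: for every κ > 0, U_t(x) = c_t x^{γ_t} + O(x^{-κ}) uniformly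
    (U : ℝ → ℝ → ℝ)
    (hU : ∀ κ : ℝ, 0 < κ → ∃ x₀ : ℝ, ∀ x ≥ x₀,
      ∀ s ∈ Icc (0:ℝ) 1, |U s x - c s * x ^ γ s| ≤ x ^ (-κ))
    -- the mesh condition on δₙ
    (δ : ℕ → ℝ) (hδpos : ∀ n, 0 < δ n) (hδ0 : Tendsto δ atTop (𝓝 0))
    (hδsmall : Tendsto (fun n : ℕ => δ n /
      min ((k n : ℝ) ^ (-(1 / (2 * α₂))) * (Real.log n) ^ (-(1 / α₂)))
          ((k n : ℝ) ^ (-(1 / α₁)))) atTop (𝓝 0))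
    -- λₙ = kₙ^{-1/2} and the scale function a_t(x) = γ_t c_t x^{γ_t}
    (lam : ℕ → ℝ) (hlam : ∀ n, lam n = (k n : ℝ) ^ (-(1/2 : ℝ)))
    (a : ℝ → ℝ → ℝ) (ha : ∀ s x, a s x = γ s * c s * x ^ γ s) :
    -- (2.11): sup_{|s-u|≤δₙ} |γ_s - γ_u| = o(λₙ)
    (∀ η > 0, ∀ᶠ n : ℕ in atTop, ∀ s ∈ Icc (0:ℝ) 1, ∀ u ∈ Icc (0:ℝ) 1,
      |s - u| ≤ δ n → |γ s - γ u| ≤ η * lam n) ∧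
    -- (2.12): sup_{|s-u|≤δₙ} |a_s(n/kₙ)/a_u(n/kₙ) - 1| = o(λₙ)
    (∀ η > 0, ∀ᶠ n : ℕ in atTop, ∀ s ∈ Icc (0:ℝ) 1, ∀ u ∈ Icc (0:ℝ) 1,
      |s - u| ≤ δ n →
        |a s ((n : ℝ) / (k n : ℝ)) / a u ((n : ℝ) / (k n : ℝ)) - 1| ≤ η * lam n) ∧
    -- (2.13): sup_{|s-u|≤δₙ} |(U_s(n/kₙ) - U_u(n/kₙ))/a_u(n/kₙ)| = o(λₙ)
    (∀ η > 0, ∀ᶠ n : ℕ in atTop, ∀ s ∈ Icc (0:ℝ) 1, ∀ u ∈ Icc (0:ℝ) 1,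
      |s - u| ≤ δ n →
        |(U s ((n : ℝ) / (k n : ℝ)) - U u ((n : ℝ) / (k n : ℝ)))
          / a u ((n : ℝ) / (k n : ℝ))| ≤ η * lam n) :=
  holder_model_smoothness_general γ c C₂ C α₁ α₂ hC₂ hC hα₁ hα₂ hγpos hcpos hγhold hchold k hk ε hε
    hksmall U hU δ hδsmall lam hlam a ha
end

section
/- Let γ : [0,1] → ℝ be continuous, let (δ_n) be positive with δ_n → 0, and let (λ_n) be a positive bounded sequence. For y > 0 define g_y(γ) := (y^γ − 1)/γ for γ ≠ 0 and g_y(0) := log y. If sup_{|s−t|≤δ_n} |g_2(γ_s)/g_2(γ_t) − 1| = o(λ_n) and sup_{|s−t|≤δ_n} |g_4(γ_s)/g_4(γ_t) − 1| = o(λ_n), then sup_{|s−t|≤δ_n} |γ_s − γ_t| = o(λ_n). -/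
open Filter Topology Set

noncomputable def gfun (y γ : ℝ) : ℝ := if γ = 0 then Real.log y else (y ^ γ - 1) / γ

lemma gfun2_pos (g : ℝ) : 0 < gfun 2 g := by
  unfold gfun
  rcases eq_or_ne g 0 with h | h
  · simp [h]; exact Real.log_pos (by norm_num)
  · simp only [h, if_false]
    rcases lt_or_gt_of_ne h with hneg | hpos
    · apply div_pos_of_neg_of_neg
      · have : (2:ℝ) ^ g < 1 := Real.rpow_lt_one_of_one_lt_of_neg (by norm_num) hneg
        linarith
      · exact hneg
    · apply div_pos
      · have : (1:ℝ) < (2:ℝ) ^ g := (Real.one_lt_rpow_iff_of_pos (by norm_num)).mpr (Or.inl ⟨by norm_num, hpos⟩)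
        linarith
      · exact hpos

lemma gfun4_eq (g : ℝ) : gfun 4 g = gfun 2 g * ((2:ℝ) ^ g + 1) := by
  unfold gfun
  rcases eq_or_ne g 0 with h | h
  · simp only [h, if_true, Real.rpow_zero]
    rw [show (4:ℝ) = 2 ^ (2:ℕ) by norm_num, Real.log_pow]
    push_cast; ring
  · simp only [h, if_false]
    have h4 : (4:ℝ) ^ g = (2:ℝ) ^ g * (2:ℝ) ^ g := by
      rw [show (4:ℝ) = 2 * 2 by norm_num, Real.mul_rpow (by norm_num) (by norm_num)]
    rw [h4]; field_simp; ring

lemma key_growth (M a b : ℝ) (ha : -M ≤ a) (hab : a ≤ b) :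
    Real.log 2 * (2:ℝ) ^ (-M) * (b - a) ≤ (2:ℝ) ^ b - (2:ℝ) ^ a := by
  have h1 : (2:ℝ) ^ b - (2:ℝ) ^ a = (2:ℝ) ^ a * ((2:ℝ) ^ (b - a) - 1) := by
    rw [mul_sub, mul_one, ← Real.rpow_add (by norm_num)]; ring_nf
  rw [h1]
  have h2 : (b - a) * Real.log 2 + 1 ≤ (2:ℝ) ^ (b - a) := by
    rw [Real.rpow_def_of_pos (by norm_num)]
    have := Real.add_one_le_exp (Real.log 2 * (b - a))
    linarith
  have h3 : (2:ℝ) ^ (-M) ≤ (2:ℝ) ^ a :=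
    Real.rpow_le_rpow_left_iff (by norm_num : (1:ℝ) < 2) |>.mpr ha
  have hp : (0:ℝ) < (2:ℝ) ^ (-M) := Real.rpow_pos_of_pos (by norm_num) _
  have hlog : (0:ℝ) < Real.log 2 := Real.log_pos (by norm_num)
  nlinarith [mul_le_mul_of_nonneg_right h3 (by nlinarith : (0:ℝ) ≤ (2:ℝ)^(b-a) - 1)]

lemma key_growth_abs (M a b : ℝ) (ha : |a| ≤ M) (hb : |b| ≤ M) :
    Real.log 2 * (2:ℝ) ^ (-M) * |a - b| ≤ |(2:ℝ) ^ a - (2:ℝ) ^ b| := by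
  rcases le_total a b with h | h
  · have hmono : (2:ℝ) ^ a ≤ (2:ℝ) ^ b :=
      (Real.rpow_le_rpow_left_iff (by norm_num : (1:ℝ) < 2)).mpr h
    have e1 : |a - b| = b - a := by rw [abs_sub_comm]; exact abs_of_nonneg (by linarith)
    have e2 : |(2:ℝ) ^ a - (2:ℝ) ^ b| = (2:ℝ) ^ b - (2:ℝ) ^ a := by
      rw [abs_sub_comm]; exact abs_of_nonneg (by linarith)
    rw [e1, e2]
    exact key_growth M a b (by linarith [(abs_le.mp ha).1]) h
  · have hmono : (2:ℝ) ^ b ≤ (2:ℝ) ^ a :=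
      (Real.rpow_le_rpow_left_iff (by norm_num : (1:ℝ) < 2)).mpr h
    have e1 : |a - b| = a - b := abs_of_nonneg (by linarith)
    have e2 : |(2:ℝ) ^ a - (2:ℝ) ^ b| = (2:ℝ) ^ a - (2:ℝ) ^ b :=
      abs_of_nonneg (by linarith)
    rw [e1, e2]
    exact key_growth M b a (by linarith [(abs_le.mp hb).1]) h

/-- final step in the proof of Theorem 2: if the ratios
g_2(γ_s)/g_2(γ_t) and g_4(γ_s)/g_4(γ_t) are 1 + o(λₙ) uniformly over |s-t| ≤ δₙ,
then sup_{|s-t|≤δₙ} |γ_s - γ_t| = o(λₙ). -/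
theorem gamma_oscillation_from_gfun_ratios
    (γ : ℝ → ℝ) (hγcont : ContinuousOn γ (Icc 0 1))
    (δ : ℕ → ℝ) (hδpos : ∀ n, 0 < δ n) (hδ0 : Tendsto δ atTop (𝓝 0))
    (lam : ℕ → ℝ) (hlam_pos : ∀ n, 0 < lam n) (hlam_bdd : ∃ C, ∀ n, lam n ≤ C)
    (h2 : ∀ ε > 0, ∀ᶠ n : ℕ in atTop, ∀ s ∈ Icc (0:ℝ) 1, ∀ u ∈ Icc (0:ℝ) 1,
      |s - u| ≤ δ n → |gfun 2 (γ s) / gfun 2 (γ u) - 1| ≤ ε * lam n)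
    (h4 : ∀ ε > 0, ∀ᶠ n : ℕ in atTop, ∀ s ∈ Icc (0:ℝ) 1, ∀ u ∈ Icc (0:ℝ) 1,
      |s - u| ≤ δ n → |gfun 4 (γ s) / gfun 4 (γ u) - 1| ≤ ε * lam n) :
    ∀ ε > 0, ∀ᶠ n : ℕ in atTop, ∀ s ∈ Icc (0:ℝ) 1, ∀ u ∈ Icc (0:ℝ) 1,
      |s - u| ≤ δ n → |γ s - γ u| ≤ ε * lam n := by
  obtain ⟨M, hM⟩ := isCompact_Icc.exists_bound_of_continuousOn hγcont
  have hM' : ∀ x ∈ Icc (0:ℝ) 1, |γ x| ≤ M := fun x hx => hM x hx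
  have hM0 : 0 ≤ M := le_trans (abs_nonneg _) (hM' 0 (by norm_num))
  obtain ⟨C, hC⟩ := hlam_bdd
  have hC0 : 0 < C := lt_of_lt_of_le (hlam_pos 0) (hC 0)
  set c := Real.log 2 * (2:ℝ) ^ (-M) with hcdef
  have hc : 0 < c := mul_pos (Real.log_pos (by norm_num)) (Real.rpow_pos_of_pos (by norm_num) _)
  have h2M : (0:ℝ) < (2:ℝ) ^ M + 1 := by positivity
  set K := 4 * ((2:ℝ) ^ M + 1) / c with hKdef
  have hK : 0 < K := by positivity
  intro ε hε
  have hε₀ : 0 < min (ε / K) (1 / (2 * C)) := by positivity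
  set ε₀ := min (ε / K) (1 / (2 * C)) with hε₀def
  filter_upwards [h2 ε₀ hε₀, h4 ε₀ hε₀] with n H2 H4
  intro s hs u hu hsu
  have hb := H2 s hs u hu hsu
  have ha := H4 s hs u hu hsu
  set η := ε₀ * lam n with hηdef
  have hη0 : 0 < η := mul_pos hε₀ (hlam_pos n)
  have hη2 : η ≤ 1 / 2 := by
    have h1 : ε₀ ≤ 1 / (2 * C) := min_le_right _ _
    have h2' : lam n ≤ C := hC n
    calc η ≤ (1 / (2 * C)) * C := by
            apply mul_le_mul h1 h2' (le_of_lt (hlam_pos n)) (by positivity)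
      _ = 1 / 2 := by field_simp <;> ring
  -- positivity of gfun values
  have gs2 := gfun2_pos (γ s)
  have gu2 := gfun2_pos (γ u)
  set fs := (2:ℝ) ^ (γ s) + 1 with hfsdef
  set fu := (2:ℝ) ^ (γ u) + 1 with hfudef
  have hfs : 0 < fs := by positivity
  have hfu : 0 < fu := by positivity
  have hes4 : gfun 4 (γ s) = gfun 2 (γ s) * fs := gfun4_eq (γ s)
  have heu4 : gfun 4 (γ u) = gfun 2 (γ u) * fu := gfun4_eq (γ u)
  set b := gfun 2 (γ s) / gfun 2 (γ u) with hbdef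
  have hb_pos : 0 < b := div_pos gs2 gu2
  have hab : gfun 4 (γ s) / gfun 4 (γ u) = b * (fs / fu) := by
    rw [hes4, heu4, hbdef]
    field_simp <;> ring
  rw [hab] at ha
  -- from hb : |b - 1| ≤ η, b ≥ 1 - η ≥ 1/2
  have hb_lb : 1 - η ≤ b := by
    have := abs_le.mp hb
    linarith [this.1]
  have hb_half : (1:ℝ)/2 ≤ b := by linarith
  -- |b * (fs/fu) - 1| ≤ η ⇒ |fs/fu - 1| ≤ (|b(fs/fu) - 1| + |b - 1| * (fs/fu)) / b ... 
  -- b*(fs/fu) - b = (b*(fs/fu) - 1) - (b - 1); |fs/fu - 1| = |b(fs/fu)-b|/b ≤ 2η/b ≤ 4η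
  have hratio : |fs / fu - 1| ≤ 4 * η := by
    have h1 : |b * (fs / fu) - b| ≤ 2 * η := by
      have : b * (fs / fu) - b = (b * (fs / fu) - 1) - (b - 1) := by ring
      rw [this]
      calc |(b * (fs / fu) - 1) - (b - 1)| ≤ |b * (fs / fu) - 1| + |b - 1| := abs_sub _ _
        _ ≤ η + η := add_le_add ha hb
        _ = 2 * η := by ring
    have h2' : b * |fs / fu - 1| ≤ 2 * η := by
      rw [← abs_of_pos hb_pos, ← abs_mul]
      calc |b * (fs / fu - 1)| = |b * (fs / fu) - b| := by ring_nf
        _ ≤ 2 * η := h1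
    nlinarith [abs_nonneg (fs / fu - 1)]
  -- |fs - fu| ≤ fu * 4η ≤ (2^M + 1) * 4η
  have hfu_ub : fu ≤ (2:ℝ) ^ M + 1 := by
    have : (2:ℝ) ^ (γ u) ≤ (2:ℝ) ^ M := by
      apply Real.rpow_le_rpow_left_iff (by norm_num : (1:ℝ) < 2) |>.mpr
      exact (abs_le.mp (hM' u hu)).2
    simp only [hfudef]; linarith
  have hdiff : |fs - fu| ≤ ((2:ℝ) ^ M + 1) * (4 * η) := by
    have he : |fs - fu| = fu * |fs / fu - 1| := by
      have h0 : fu * (fs / fu - 1) = fs - fu := by field_simp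
      rw [← h0, abs_mul, abs_of_pos hfu]
    rw [he]
    exact mul_le_mul hfu_ub hratio (abs_nonneg _) (le_of_lt h2M)
  have hkey : c * |γ s - γ u| ≤ |fs - fu| := by
    have hk := key_growth_abs M (γ s) (γ u) (hM' s hs) (hM' u hu)
    have e : fs - fu = (2:ℝ) ^ (γ s) - (2:ℝ) ^ (γ u) := by rw [hfsdef, hfudef]; ring
    rw [e]
    exact hk
  have hfin : c * |γ s - γ u| ≤ ((2:ℝ) ^ M + 1) * (4 * η) := le_trans hkey hdiff
  have hgd : |γ s - γ u| ≤ K * η := by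
    rw [hKdef, div_mul_eq_mul_div, le_div_iff₀ hc]
    nlinarith
  have hKε : K * ε₀ ≤ ε := by
    have h1 : ε₀ ≤ ε / K := min_le_left _ _
    calc K * ε₀ ≤ K * (ε / K) := mul_le_mul_of_nonneg_left h1 hK.le
      _ = ε := by field_simp
  calc |γ s - γ u| ≤ K * η := hgd
    _ = (K * ε₀) * lam n := by rw [hηdef]; ring
    _ ≤ ε * lam n := mul_le_mul_of_nonneg_right hKε (le_of_lt (hlam_pos n))
end
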